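/- arXiv:2104.11837 — 5 statements merged into one kernel-verified Lean document; each statement's English description precedes it below -/
import Mathlib

section
/- Let N ≥ 1 and t be real with t ≠ −1 and t ≠ −N. Suppose reals a_1,…,a_{N+1} and b_1,…,b_{N+1} satisfy, for every i ∈ {1,…,N+1}, Σ_{i'≠i} a_{i'} = ((t+N)/(t+1))·b_i + ((N−1)/(t+1))·a_i. Then Σ_{i≠1} b_i = ((N−1)t/(t+1))·b_1 + ((Nt+1)/(t+1))·a_1. -/
theorem stmt_6 (N : ℕ) (hN : 1 ≤ N) (t : ℝ) (ht : t ≠ -1) (ht' : t ≠ -(N : ℝ))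
    (a b : ℕ → ℝ)
    (h : ∀ i ∈ Finset.Icc 1 (N + 1),
      ∑ i' ∈ (Finset.Icc 1 (N + 1)).erase i, a i'
        = ((t + N) / (t + 1)) * b i + (((N : ℝ) - 1) / (t + 1)) * a i) :
    ∑ i ∈ (Finset.Icc 1 (N + 1)).erase 1, b i
      = (((N : ℝ) - 1) * t / (t + 1)) * b 1 + (((N : ℝ) * t + 1) / (t + 1)) * a 1 := by
  have ht1 : t + 1 ≠ 0 := fun h' => ht (by linarith)
  have htN : t + (N : ℝ) ≠ 0 := fun h' => ht' (by linarith)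
  set S := ∑ i ∈ Finset.Icc 1 (N + 1), a i with hS
  have hb : ∀ i ∈ Finset.Icc 1 (N + 1), b i = (t + 1) / (t + (N : ℝ)) * S - a i := by
    intro i hi
    have h1 := h i hi
    rw [Finset.sum_erase_eq_sub hi, ← hS] at h1
    field_simp at h1 ⊢
    linear_combination -h1
  have h1mem : 1 ∈ Finset.Icc 1 (N + 1) := by
    simp [Nat.le_add_left]
  have hcard : ((Finset.Icc 1 (N + 1)).erase 1).card = N := by
    rw [Finset.card_erase_of_mem h1mem, Nat.card_Icc]
    simp
  have hsum : ∑ i ∈ (Finset.Icc 1 (N + 1)).erase 1, b i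
      = (N : ℝ) * ((t + 1) / (t + (N : ℝ)) * S) - (S - a 1) := by
    rw [Finset.sum_congr rfl (fun i hi => hb i (Finset.mem_of_mem_erase hi))]
    rw [Finset.sum_sub_distrib, Finset.sum_const, hcard, nsmul_eq_mul,
      Finset.sum_erase_eq_sub h1mem, ← hS]
  rw [hsum, hb 1 h1mem]
  field_simp
  ring
end

section
/- Let n ≥ 2, d ≥ 2, N = 2^d − 1, and for real λ set t = 1 − Nλ. Define R_{n,d}(λ) = 1 + (λ−1)·U_{n-1}(t)^2 + (t+λ+1)·U_{n-1}(t)·U_{n-2}(t) − t·U_{n-2}(t)^2 and A_{n,d}(λ) = U_{n-1}(t) + U_{n-2}(t). Then for all real λ, R_{n,d}(λ) = λ·A_{n,d}(λ)·(U_{n-1}(t) + N·U_{n-2}(t)). -/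
noncomputable def Uv (k : ℤ) (t : ℝ) : ℝ := (Polynomial.Chebyshev.U ℝ k).eval t
noncomputable def Tv (k : ℤ) (t : ℝ) : ℝ := (Polynomial.Chebyshev.T ℝ k).eval t

lemma Uv_add_two (k : ℤ) (t : ℝ) : Uv (k + 2) t = 2 * t * Uv (k + 1) t - Uv k t := by
  simp [Uv, Polynomial.Chebyshev.U_add_two]

lemma Uv_pell (m : ℕ) (t : ℝ) :
    Uv ((m : ℤ) + 1) t ^ 2 - 2 * t * Uv ((m : ℤ) + 1) t * Uv m t + Uv m t ^ 2 = 1 := by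
  induction m with
  | zero => simp [Uv, Polynomial.Chebyshev.U_one]; ring
  | succ k ih =>
    have h := Uv_add_two k t
    push_cast
    have : ((k : ℤ) + 1 + 1) = (k : ℤ) + 2 := by ring
    rw [this, h]
    push_cast at ih
    nlinarith [ih]

theorem stmt_7 (n d : ℕ) (hn : 2 ≤ n) (hd : 2 ≤ d) (lam : ℝ) :
    (fun N t => 1 + (lam - 1) * Uv ((n : ℤ) - 1) t ^ 2
        + (t + lam + 1) * Uv ((n : ℤ) - 1) t * Uv ((n : ℤ) - 2) t
        - t * Uv ((n : ℤ) - 2) t ^ 2)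
      ((2 : ℝ) ^ d - 1) (1 - ((2 : ℝ) ^ d - 1) * lam)
    = (fun N t => lam * (Uv ((n : ℤ) - 1) t + Uv ((n : ℤ) - 2) t)
        * (Uv ((n : ℤ) - 1) t + N * Uv ((n : ℤ) - 2) t))
      ((2 : ℝ) ^ d - 1) (1 - ((2 : ℝ) ^ d - 1) * lam) := by
  obtain ⟨m, rfl⟩ : ∃ m, n = m + 2 := ⟨n - 2, by omega⟩
  simp only []
  set t : ℝ := 1 - ((2 : ℝ) ^ d - 1) * lam with ht
  have h1 : ((m + 2 : ℕ) : ℤ) - 1 = (m : ℤ) + 1 := by push_cast; ring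
  have h2 : ((m + 2 : ℕ) : ℤ) - 2 = (m : ℤ) := by push_cast; ring
  rw [h1, h2]
  have hp := Uv_pell m t
  rw [ht] at hp
  linear_combination -hp
end

section
/- Let n ≥ 2, d ≥ 2, N = 2^d − 1, and for real λ set t = 1 − Nλ. Define R_{n,d}(λ) = 1 + (λ−1)·U_{n-1}(t)^2 + (t+λ+1)·U_{n-1}(t)·U_{n-2}(t) − t·U_{n-2}(t)^2 and S_{n,d}(λ) = T_n(t) + N·T_{n-1}(t). Then for all real λ, N·R_{n,d}(λ) − 2^d = S_{n,d}(λ)·(U_{n-2}(t) − U_{n-1}(t)). -/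
/-!
Write `u = U_{n-1}(t)`, `v = U_{n-2}(t)`. By the recurrence, `T_n(t) = t u - v` and
`T_{n-1}(t) = u - t v`, and substituting `N λ = 1 - t` the difference of the two sides of the
identity becomes `u² - 2 t u v + v² - 1`, which vanishes by the Cassini-type identity for `U`.
-/

open Polynomial Polynomial.Chebyshev

namespace Polynomial.Chebyshev

variable (R : Type*) [CommRing R]

theorem U_sq_add_U_sq_sub_two_mul_X_mul (n : ℤ) :
    U R n ^ 2 + U R (n + 1) ^ 2 - 2 * X * U R n * U R (n + 1) = 1 := by
  have h := congrArg (fun p : R[X] => p.comp (2 * X)) (S_sq_add_S_sq R n)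
  simpa only [sub_comp, add_comp, mul_comp, pow_comp, S_comp_two_mul_X, X_comp, one_comp,
    mul_assoc] using h

theorem U_eval_sq_add_U_eval_sq_sub (n : ℤ) (t : R) :
    (U R (n - 2)).eval t ^ 2 + (U R (n - 1)).eval t ^ 2
      - 2 * t * (U R (n - 2)).eval t * (U R (n - 1)).eval t = 1 := by
  have h := congrArg (eval t) (U_sq_add_U_sq_sub_two_mul_X_mul R (n - 2))
  rw [show n - 2 + 1 = n - 1 by ring] at h
  simpa using h

end Polynomial.Chebyshev

section Vicsek

variable {R : Type*} [CommRing R]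

/-- The paper's `R_{n,d}(λ)`, with `N = 2^d - 1` as a parameter. -/
noncomputable def vicsekR (N : R) (n : ℤ) (lam : R) : R :=
  let t := 1 - N * lam
  1 + (lam - 1) * (U R (n - 1)).eval t ^ 2
    + (t + lam + 1) * (U R (n - 1)).eval t * (U R (n - 2)).eval t
    - t * (U R (n - 2)).eval t ^ 2

/-- The paper's `S_{n,d}(λ)`, with `N = 2^d - 1` as a parameter. -/
noncomputable def vicsekS (N : R) (n : ℤ) (lam : R) : R :=
  (T R n).eval (1 - N * lam) + N * (T R (n - 1)).eval (1 - N * lam)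

theorem mul_vicsekR_sub_eq_vicsekS_mul (N : R) (n : ℤ) (lam : R) :
    N * vicsekR N n lam - (N + 1) = vicsekS N n lam *
      ((U R (n - 2)).eval (1 - N * lam) - (U R (n - 1)).eval (1 - N * lam)) := by
  have hTn : ∀ t : R, (T R n).eval t = t * (U R (n - 1)).eval t - (U R (n - 2)).eval t := by
    intro t
    have h := T_eq_X_mul_U_sub_U R (n - 2)
    rw [show n - 2 + 2 = n by ring, show n - 2 + 1 = n - 1 by ring] at h
    simp [h]
  have hTn1 : ∀ t : R, (T R (n - 1)).eval t = (U R (n - 1)).eval t - t * (U R (n - 2)).eval t := by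
    intro t
    rw [T_eq_U_sub_X_mul_U, sub_sub, show (1 : ℤ) + 1 = 2 by rfl]
    simp
  simp only [vicsekR, vicsekS, hTn, hTn1]
  linear_combination U_eval_sq_add_U_eval_sq_sub R n (1 - N * lam)

end Vicsek

theorem stmt_8_general (n d : ℕ) (lam : ℝ) :
    (fun N t => N * (1 + (lam - 1) * Uv ((n : ℤ) - 1) t ^ 2
        + (t + lam + 1) * Uv ((n : ℤ) - 1) t * Uv ((n : ℤ) - 2) t
        - t * Uv ((n : ℤ) - 2) t ^ 2) - 2 ^ d
      = (Tv (n : ℤ) t + N * Tv ((n : ℤ) - 1) t) * (Uv ((n : ℤ) - 2) t - Uv ((n : ℤ) - 1) t))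
      ((2 : ℝ) ^ d - 1) (1 - ((2 : ℝ) ^ d - 1) * lam) := by
  have h := mul_vicsekR_sub_eq_vicsekS_mul ((2 : ℝ) ^ d - 1) n lam
  rwa [sub_add_cancel] at h

theorem stmt_8 (n d : ℕ) (hn : 2 ≤ n) (hd : 2 ≤ d) (lam : ℝ) :
    (fun N t => N * (1 + (lam - 1) * Uv ((n : ℤ) - 1) t ^ 2
        + (t + lam + 1) * Uv ((n : ℤ) - 1) t * Uv ((n : ℤ) - 2) t
        - t * Uv ((n : ℤ) - 2) t ^ 2) - 2 ^ d
      = (Tv (n : ℤ) t + N * Tv ((n : ℤ) - 1) t) * (Uv ((n : ℤ) - 2) t - Uv ((n : ℤ) - 1) t))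
      ((2 : ℝ) ^ d - 1) (1 - ((2 : ℝ) ^ d - 1) * lam) :=
  stmt_8_general n d lam
end

section
/- For n ≥ 2, the polynomial U_{n-1}(x) + U_{n-2}(x) has exactly n−1 distinct real roots, namely x = cos(2kπ/(2n−1)) for k = 1, 2, …, n−1, and all of these lie in the open interval (−1, 1). -/
/-!
Writing `x = cos θ`, the identity `U_k(cos θ) sin θ = sin((k+1)θ)` and the sum-to-product
formula give `(U_m + U_{m-1})(cos θ) sin θ = 2 sin((2m+1)θ/2) cos(θ/2)`, which vanishes at the
`m` distinct points `θ = 2kπ/(2m+1)`, `1 ≤ k ≤ m`, of `(0, π)`. Since `U_m + U_{m-1}` has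
degree `m`, these are all of its roots.
-/

open Polynomial Polynomial.Chebyshev Real

namespace Polynomial.Chebyshev

theorem degree_U_add_U_sub_one {R : Type*} [CommRing R] [IsDomain R] [NeZero (2 : R)] (m : ℕ) :
    (U R m + U R (m - 1)).degree = m := by
  rw [degree_add_eq_left_of_degree_lt, degree_U_natCast]
  cases m with
  | zero => simp
  | succ k =>
    rw [show ((k + 1 : ℕ) : ℤ) - 1 = k by push_cast; ring, degree_U_natCast, degree_U_natCast]
    exact_mod_cast k.lt_succ_self

theorem U_add_U_sub_one_real_cos (m : ℤ) (θ : ℝ) :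
    (U ℝ m + U ℝ (m - 1)).eval (cos θ) * sin θ =
      2 * sin ((2 * m + 1) * θ / 2) * cos (θ / 2) := by
  rw [eval_add, add_mul, U_real_cos, U_real_cos, sin_add_sin]
  push_cast
  ring_nf

end Polynomial.Chebyshev

theorem two_mul_pi_div_mem_Ioo {m k : ℕ} (hk : k ∈ Set.Icc 1 m) :
    2 * k * π / (2 * m + 1) ∈ Set.Ioo 0 π := by
  obtain ⟨hk₁, hk₂⟩ := hk
  have hk₁' : (1 : ℝ) ≤ k := by exact_mod_cast hk₁
  have hk₂' : (k : ℝ) ≤ m := by exact_mod_cast hk₂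
  refine ⟨by positivity, ?_⟩
  rw [div_lt_iff₀ (by positivity)]
  nlinarith [pi_pos]

theorem injOn_cos_two_mul_pi_div (m : ℕ) :
    Set.InjOn (fun k : ℕ => cos (2 * k * π / (2 * m + 1))) (Set.Icc 1 m) := by
  intro j hj k hk hjk
  have hθ := injOn_cos (Set.Ioo_subset_Icc_self (two_mul_pi_div_mem_Ioo hj))
    (Set.Ioo_subset_Icc_self (two_mul_pi_div_mem_Ioo hk)) hjk
  field_simp at hθ
  exact_mod_cast hθ

theorem roots_U_add_U_sub_one_real (m : ℕ) :
    (U ℝ m + U ℝ (m - 1)).roots =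
      ((Finset.Icc 1 m).image fun k : ℕ => cos (2 * k * π / (2 * m + 1))).val := by
  refine roots_eq_of_degree_eq_card (fun x hx => ?_) ?_
  · obtain ⟨k, hk, rfl⟩ := Finset.mem_image.mp hx
    have hθ := two_mul_pi_div_mem_Ioo (Finset.mem_Icc.mp hk)
    refine (mul_eq_zero_iff_right (sin_pos_of_pos_of_lt_pi hθ.1 hθ.2).ne').mp ?_
    rw [U_add_U_sub_one_real_cos, Int.cast_natCast,
      show (2 * m + 1) * (2 * k * π / (2 * m + 1)) / 2 = k * π by field_simp, sin_nat_mul_pi,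
      mul_zero, zero_mul]
  · rw [Finset.card_image_of_injOn (by simpa using injOn_cos_two_mul_pi_div m), Nat.card_Icc,
      degree_U_add_U_sub_one]
    simp

theorem stmt_11 (n : ℕ) (hn : 2 ≤ n) :
    {x : ℝ | Uv ((n : ℤ) - 1) x + Uv ((n : ℤ) - 2) x = 0}
      = (fun k : ℕ => Real.cos (2 * (k : ℝ) * Real.pi / (2 * (n : ℝ) - 1))) ''
          (Set.Icc 1 (n - 1)) ∧
    Set.InjOn (fun k : ℕ => Real.cos (2 * (k : ℝ) * Real.pi / (2 * (n : ℝ) - 1)))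
      (Set.Icc 1 (n - 1)) ∧
    ∀ k ∈ Set.Icc 1 (n - 1),
      Real.cos (2 * (k : ℝ) * Real.pi / (2 * (n : ℝ) - 1)) ∈ Set.Ioo (-1 : ℝ) 1 := by
  obtain ⟨m, rfl⟩ : ∃ m, n = m + 1 := ⟨n - 1, by omega⟩
  have hden : 2 * ((m + 1 : ℕ) : ℝ) - 1 = 2 * m + 1 := by push_cast; ring
  have hU : ∀ x, Uv ((m + 1 : ℕ) - 1) x + Uv ((m + 1 : ℕ) - 2) x =
      (U ℝ m + U ℝ (m - 1)).eval x := by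
    intro x
    simp only [Uv, eval_add]
    congr 3 <;> push_cast <;> ring
  have hp : U ℝ m + U ℝ (m - 1) ≠ 0 := fun h => by
    simpa [h] using degree_U_add_U_sub_one (R := ℝ) m
  simp only [hden, hU, Nat.add_sub_cancel]
  refine ⟨?_, injOn_cos_two_mul_pi_div m, fun k hk => ?_⟩
  · ext x
    rw [Set.mem_ofPred_eq, ← IsRoot.def, ← mem_roots hp, roots_U_add_U_sub_one_real,
      Finset.mem_val, ← Finset.mem_coe, Finset.coe_image, Finset.coe_Icc]
  · obtain ⟨hθ₀, hθπ⟩ := two_mul_pi_div_mem_Ioo hk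
    refine ⟨?_, ?_⟩
    · simpa using cos_lt_cos_of_nonneg_of_le_pi hθ₀.le le_rfl hθπ
    · simpa using cos_lt_cos_of_nonneg_of_le_pi le_rfl hθπ.le hθ₀
end

section
/- For all d, n ≥ 2 and m ≥ 0, the level-m vertex set of the Vicsek set V_n^d satisfies #V_m = (2^d·n − 2^d + 1)^m·(2^d − 1) + 1. -/
/-- Contraction maps of the Vicsek i.f.s. in dimension `d` with parameter `n`,
indexed by a corner `q` of the unit cube and `j ∈ {1,…,n}`. -/
noncomputable def vicsekF (d n : ℕ) (q : Fin d → ℝ) (j : ℕ) (x : Fin d → ℝ) : Fin d → ℝ :=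
  fun i => x i / (2 * n - 1) + ((2 * n - 2) / (2 * n - 1)) *
    ((((n : ℝ) - j) / ((n : ℝ) - 1)) * q i + (((j : ℝ) - 1) / ((n : ℝ) - 1)) * (1 / 2))

/-- The corners of the unit cube `{0,1}^d`. -/
def vicsekCorners (d : ℕ) : Set (Fin d → ℝ) := {x | ∀ i, x i = 0 ∨ x i = 1}

/-- The level-`m` vertex set of the Vicsek set. -/
noncomputable def vicsekV (d n : ℕ) : ℕ → Set (Fin d → ℝ)
  | 0 => vicsekCorners d
  | m + 1 => ⋃ q ∈ vicsekCorners d, ⋃ j ∈ Finset.Icc 1 n, vicsekF d n q j '' vicsekV d n m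

/-!
Scaled by `2n - 1`, the cell `F_{q,j}(V_m)` lies in an integer grid cube, the `j`-th one from the
corner `q` on the diagonal through `q`; the cube of level `n` is the common centre. Hence the cells
`(q, j)` and `(q, j + 1)` meet in exactly one junction point and any two other cells are disjoint
(or equal, at the centre). Adding the cells level by level from the centre outwards, each new cell
meets the union built so far only in its junction point, so
`#V_{m+1} + (n - 1) 2^d = (1 + (n - 1) 2^d) #V_m`, and the closed form follows by induction on `m`.
-/

namespace Vicsek

variable {d n : ℕ}

lemma vicsekCorners_eq_piFinset :
    vicsekCorners d = ↑(Fintype.piFinset fun _ : Fin d => ({0, 1} : Finset ℝ)) := by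
  ext x
  simp [vicsekCorners]

lemma ncard_vicsekCorners : (vicsekCorners d).ncard = 2 ^ d := by
  rw [vicsekCorners_eq_piFinset, Set.ncard_coe_finset, Fintype.card_piFinset]
  simp

lemma vicsekCorners_finite : (vicsekCorners d).Finite := by
  rw [vicsekCorners_eq_piFinset]
  exact Finset.finite_toSet _

/-- Scaled by `2n - 1`, the cell `vicsekF d n q j '' [0,1]^d` is the grid cube with lower corner
`offset n q j`, the `j`-th cube from the corner `q` along the diagonal through `q`. -/
def offset (n : ℕ) (q : Fin d → ℝ) (j : ℕ) (i : Fin d) : ℝ :=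
  2 * ((n : ℝ) - j) * q i + ((j : ℝ) - 1)

lemma offset_of_eq_zero {q : Fin d → ℝ} {i : Fin d} (h : q i = 0) (j : ℕ) :
    offset n q j i = j - 1 := by
  simp [offset, h]

lemma offset_of_eq_one {q : Fin d → ℝ} {i : Fin d} (h : q i = 1) (j : ℕ) :
    offset n q j i = 2 * n - j - 1 := by
  simp only [offset, h]; ring

lemma offset_succ (q : Fin d → ℝ) (j : ℕ) (i : Fin d) :
    offset n q (j + 1) i = offset n q j i + 1 - 2 * q i := by
  simp only [offset]; push_cast; ring

lemma offset_mem_Icc {q : Fin d → ℝ} (hq : q ∈ vicsekCorners d) {j : ℕ}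
    (hj : j ∈ Finset.Icc 1 n) (i : Fin d) :
    0 ≤ offset n q j i ∧ offset n q j i + 1 ≤ 2 * n - 1 := by
  rw [Finset.mem_Icc] at hj
  have h1 : (1 : ℝ) ≤ j := by exact_mod_cast hj.1
  have h2 : (j : ℝ) ≤ n := by exact_mod_cast hj.2
  rcases hq i with h | h
  · rw [offset_of_eq_zero h]; constructor <;> linarith
  · rw [offset_of_eq_one h]; constructor <;> linarith

lemma two_mul_sub_one_pos (hn : 0 < n) : (0 : ℝ) < 2 * n - 1 := by
  have : (1 : ℝ) ≤ n := by exact_mod_cast hn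
  linarith

lemma mul_vicsekF_apply (hn : 2 ≤ n) (q : Fin d → ℝ) (j : ℕ) (x : Fin d → ℝ) (i : Fin d) :
    (2 * n - 1) * vicsekF d n q j x i = x i + offset n q j i := by
  have h1 : (n : ℝ) - 1 ≠ 0 := sub_ne_zero.2 (by exact_mod_cast (by omega : n ≠ 1))
  have h2 := (two_mul_sub_one_pos (n := n) (by omega)).ne'
  simp only [vicsekF, offset]
  field_simp

lemma vicsekF_injective (hn : 2 ≤ n) (q : Fin d → ℝ) (j : ℕ) :
    Function.Injective (vicsekF d n q j) := by
  intro x y hxy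
  funext i
  have := mul_vicsekF_apply hn q j x i
  rw [hxy, mul_vicsekF_apply hn] at this
  linarith

lemma vicsekF_center (q q' : Fin d → ℝ) : vicsekF d n q n = vicsekF d n q' n := by
  funext x i
  simp [vicsekF]

lemma vicsekV_subset_unitCube (hn : 2 ≤ n) {m : ℕ} {x : Fin d → ℝ} (hx : x ∈ vicsekV d n m)
    (i : Fin d) : 0 ≤ x i ∧ x i ≤ 1 := by
  induction m generalizing x with
  | zero => rcases hx i with h | h <;> simp [h]
  | succ m ih =>
    simp only [vicsekV, Set.mem_iUnion] at hx
    obtain ⟨q, hq, j, hj, y, hy, rfl⟩ := hx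
    have hc := offset_mem_Icc hq hj i
    have hy := ih hy
    have hx := mul_vicsekF_apply hn q j y i
    have hs := two_mul_sub_one_pos (n := n) (by omega)
    constructor <;> nlinarith

lemma vicsekCorners_subset_vicsekV (hn : 2 ≤ n) (m : ℕ) : vicsekCorners d ⊆ vicsekV d n m := by
  induction m with
  | zero => exact subset_rfl
  | succ m ih =>
    intro q hq
    simp only [vicsekV, Set.mem_iUnion]
    refine ⟨q, hq, 1, Finset.mem_Icc.2 ⟨le_rfl, by omega⟩, q, ih hq, funext fun i => ?_⟩
    apply mul_left_cancel₀ (two_mul_sub_one_pos (n := n) (by omega)).ne'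
    rw [mul_vicsekF_apply hn]
    rcases hq i with h | h
    · simp [h, offset_of_eq_zero h]
    · rw [h, offset_of_eq_one h]; push_cast; ring

lemma vicsekV_finite (m : ℕ) : (vicsekV d n m).Finite := by
  induction m with
  | zero => exact vicsekCorners_finite
  | succ m ih =>
    exact vicsekCorners_finite.biUnion fun q _ =>
      (Finset.Icc 1 n).finite_toSet.biUnion fun j _ => ih.image _

variable (n) in
noncomputable def cell (m : ℕ) (q : Fin d → ℝ) (j : ℕ) : Set (Fin d → ℝ) :=
  vicsekF d n q j '' vicsekV d n m

lemma ncard_cell (hn : 2 ≤ n) (m : ℕ) (q : Fin d → ℝ) (j : ℕ) :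
    (cell n m q j).ncard = (vicsekV d n m).ncard :=
  Set.ncard_image_of_injective _ (vicsekF_injective hn q j)

lemma cell_finite (m : ℕ) (q : Fin d → ℝ) (j : ℕ) : (cell n m q j).Finite :=
  (vicsekV_finite m).image _

lemma cell_center (m : ℕ) (q q' : Fin d → ℝ) : cell n m q n = cell n m q' n := by
  rw [cell, cell, vicsekF_center q q']

lemma offset_le_mul_of_mem_cell (hn : 2 ≤ n) {m : ℕ} {q : Fin d → ℝ} {j : ℕ} {x : Fin d → ℝ}
    (hx : x ∈ cell n m q j) (i : Fin d) :
    offset n q j i ≤ (2 * n - 1) * x i ∧ (2 * n - 1) * x i ≤ offset n q j i + 1 := by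
  obtain ⟨y, hy, rfl⟩ := hx
  have := vicsekV_subset_unitCube hn hy i
  rw [mul_vicsekF_apply hn]
  constructor <;> linarith

lemma disjoint_cell_of_offset_lt (hn : 2 ≤ n) {m : ℕ} {q q' : Fin d → ℝ} {j j' : ℕ} (i : Fin d)
    (h : offset n q j i + 1 < offset n q' j' i) : Disjoint (cell n m q j) (cell n m q' j') :=
  Set.disjoint_left.2 fun _ hx hx' =>
    (offset_le_mul_of_mem_cell hn hx' i).1.not_gt <|
      h.trans_le' (offset_le_mul_of_mem_cell hn hx i).2

lemma disjoint_cell_of_add_two_le (hd : 0 < d) (hn : 2 ≤ n) {m : ℕ} {q : Fin d → ℝ}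
    (hq : q ∈ vicsekCorners d) {j j' : ℕ} (h : j + 2 ≤ j') :
    Disjoint (cell n m q j) (cell n m q j') := by
  have h' : (j : ℝ) + 2 ≤ j' := by exact_mod_cast h
  rcases hq ⟨0, hd⟩ with h0 | h1
  · exact disjoint_cell_of_offset_lt hn ⟨0, hd⟩ (by simp only [offset_of_eq_zero h0]; linarith)
  · exact (disjoint_cell_of_offset_lt hn ⟨0, hd⟩
      (by simp only [offset_of_eq_one h1]; linarith)).symm

lemma disjoint_cell_of_apply_ne (hn : 2 ≤ n) {m : ℕ} {q q' : Fin d → ℝ}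
    (hq : q ∈ vicsekCorners d) (hq' : q' ∈ vicsekCorners d) {i : Fin d} (hi : q i ≠ q' i)
    {j j' : ℕ} (h : j + j' + 2 ≤ 2 * n) : Disjoint (cell n m q j) (cell n m q' j') := by
  have h' : (j : ℝ) + j' + 2 ≤ 2 * n := by exact_mod_cast h
  rcases hq i with h0 | h1 <;> rcases hq' i with h0' | h1'
  · exact absurd (h0.trans h0'.symm) hi
  · exact disjoint_cell_of_offset_lt hn i
      (by rw [offset_of_eq_zero h0, offset_of_eq_one h1']; linarith)
  · exact (disjoint_cell_of_offset_lt hn i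
      (by rw [offset_of_eq_zero h0', offset_of_eq_one h1]; linarith)).symm
  · exact absurd (h1.trans h1'.symm) hi

variable (n) in
noncomputable def junction (q : Fin d → ℝ) (j : ℕ) : Fin d → ℝ := vicsekF d n q j (1 - q)

lemma one_sub_mem_vicsekCorners {q : Fin d → ℝ} (hq : q ∈ vicsekCorners d) :
    1 - q ∈ vicsekCorners d := fun i => by
  rcases hq i with h | h <;> simp [h]

lemma cell_inter_cell_succ (hn : 2 ≤ n) (m : ℕ) {q : Fin d → ℝ} (hq : q ∈ vicsekCorners d)
    (j : ℕ) : cell n m q j ∩ cell n m q (j + 1) = {junction n q j} := by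
  -- in each coordinate the two cells lie in adjacent grid intervals, which share one endpoint
  have hs := (two_mul_sub_one_pos (n := n) (by omega)).ne'
  refine subset_antisymm ?_ ?_
  · rintro x ⟨hx, hx'⟩
    refine funext fun i => ?_
    have h := offset_le_mul_of_mem_cell hn hx i
    have h' := offset_le_mul_of_mem_cell hn hx' i
    rw [offset_succ] at h'
    apply mul_left_cancel₀ hs
    rw [junction, mul_vicsekF_apply hn, Pi.sub_apply, Pi.one_apply]
    rcases hq i with h0 | h1
    · rw [h0] at h' ⊢; linarith
    · rw [h1] at h' ⊢; linarith
  · rintro _ rfl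
    refine ⟨⟨1 - q, vicsekCorners_subset_vicsekV hn m (one_sub_mem_vicsekCorners hq), rfl⟩,
      q, vicsekCorners_subset_vicsekV hn m hq, funext fun i => mul_left_cancel₀ hs ?_⟩
    rw [junction, mul_vicsekF_apply hn, mul_vicsekF_apply hn, offset_succ, Pi.sub_apply,
      Pi.one_apply]
    ring

lemma cell_inter_cell_subset (hd : 0 < d) (hn : 2 ≤ n) (m : ℕ) {q q' : Fin d → ℝ}
    (hq : q ∈ vicsekCorners d) (hq' : q' ∈ vicsekCorners d) {j j' : ℕ} (hjj' : j < j')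
    (hj' : j' ≤ n) : cell n m q j ∩ cell n m q' j' ⊆ {junction n q j} := by
  have same_corner : ∀ j', j < j' → cell n m q j ∩ cell n m q j' ⊆ {junction n q j} := by
    intro j' hjj'
    obtain rfl | h := (Nat.succ_le_of_lt hjj').eq_or_lt
    · exact (cell_inter_cell_succ hn m hq j).subset
    · simp [(disjoint_cell_of_add_two_le hd hn hq h).inter_eq]
  by_cases h : q' = q ∨ j' = n
  · obtain rfl | rfl := h
    · exact same_corner j' hjj'
    · rw [cell_center m q' q]
      exact same_corner _ hjj'
  · obtain ⟨hqq', hj'n⟩ := not_or.1 h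
    obtain ⟨i, hi⟩ := Function.ne_iff.1 (Ne.symm hqq')
    simp [(disjoint_cell_of_apply_ne hn hq hq' hi (j := j) (j' := j') (by omega)).inter_eq]

lemma ncard_union_add_one_of_inter_eq_singleton {α : Type*} {s t : Set α} {a : α} (hs : s.Finite)
    (ht : t.Finite) (h : s ∩ t = {a}) : (s ∪ t).ncard + 1 = s.ncard + t.ncard := by
  rw [← Set.ncard_union_add_ncard_inter s t hs ht, h, Set.ncard_singleton]

variable (d n) in
noncomputable def cellsFrom (m j : ℕ) : Set (Fin d → ℝ) :=
  ⋃ q ∈ vicsekCorners d, ⋃ j' ∈ Finset.Icc j n, cell n m q j'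

lemma cellsFrom_finite (m j : ℕ) : (cellsFrom d n m j).Finite :=
  vicsekCorners_finite.biUnion fun _ _ =>
    (Finset.Icc j n).finite_toSet.biUnion fun _ _ => cell_finite m _ _

lemma cellsFrom_eq_union {m j : ℕ} (hjn : j < n) :
    cellsFrom d n m j = cellsFrom d n m (j + 1) ∪ ⋃ q ∈ vicsekCorners d, cell n m q j := by
  have : Finset.Icc j n = insert j (Finset.Icc (j + 1) n) := by
    ext k; simp only [Finset.mem_Icc, Finset.mem_insert]; omega
  rw [Set.union_comm]
  simp only [cellsFrom, this, Finset.set_biUnion_insert, Set.iUnion_union_distrib]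

lemma cellsFrom_self (m : ℕ) : cellsFrom d n m n = cell n m 0 n := by
  have h0 : (0 : Fin d → ℝ) ∈ vicsekCorners d := fun _ => Or.inl rfl
  simp only [cellsFrom, Finset.Icc_self, Finset.set_biUnion_singleton, cell_center m _ 0]
  exact Set.biUnion_const ⟨0, h0⟩ _

lemma union_cells_inter_cell (hd : 0 < d) (hn : 2 ≤ n) (m : ℕ) {j : ℕ} (hj : j < n)
    {q : Fin d → ℝ} (hq : q ∈ vicsekCorners d) {T : Set (Fin d → ℝ)}
    (hT : T ⊆ vicsekCorners d) (hqT : q ∉ T) :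
    (cellsFrom d n m (j + 1) ∪ ⋃ q' ∈ T, cell n m q' j) ∩ cell n m q j = {junction n q j} := by
  refine subset_antisymm ?_ ?_
  · rintro x ⟨hx | hx, hxq⟩ <;> simp only [cellsFrom, Set.mem_iUnion, Finset.mem_Icc] at hx
    · obtain ⟨q', hq', j', ⟨hjj', hj'n⟩, hx⟩ := hx
      exact cell_inter_cell_subset hd hn m hq hq' hjj' hj'n ⟨hxq, hx⟩
    · obtain ⟨q', hq', hx⟩ := hx
      obtain ⟨i, hi⟩ := Function.ne_iff.1 (ne_of_mem_of_not_mem hq' hqT)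
      exact (Set.disjoint_left.1
        (disjoint_cell_of_apply_ne hn (hT hq') hq hi (j := j) (j' := j) (by omega)) hx hxq).elim
  · rintro _ rfl
    have h := (cell_inter_cell_succ hn m hq j).ge rfl
    refine ⟨Or.inl ?_, h.1⟩
    simp only [cellsFrom, Set.mem_iUnion, Finset.mem_Icc]
    exact ⟨q, hq, j + 1, ⟨le_rfl, hj⟩, h.2⟩

lemma ncard_cellsFrom_add (hd : 0 < d) (hn : 2 ≤ n) (m : ℕ) {j : ℕ} (hj : j < n) :
    (cellsFrom d n m j).ncard + 2 ^ d =
      (cellsFrom d n m (j + 1)).ncard + 2 ^ d * (vicsekV d n m).ncard := by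
  rw [cellsFrom_eq_union hj, ← ncard_vicsekCorners]
  refine Set.Finite.induction_on_subset (motive := fun T _ =>
    (cellsFrom d n m (j + 1) ∪ ⋃ q ∈ T, cell n m q j).ncard + T.ncard =
      (cellsFrom d n m (j + 1)).ncard + T.ncard * (vicsekV d n m).ncard)
    _ vicsekCorners_finite (by simp) ?_
  intro q T hq hT hqT ih
  have hTfin := vicsekCorners_finite.subset hT
  have hunion := ncard_union_add_one_of_inter_eq_singleton
    ((cellsFrom_finite m _).union (hTfin.biUnion fun _ _ => cell_finite m _ _))
    (cell_finite m q j) (union_cells_inter_cell hd hn m hj hq hT hqT)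
  rw [Set.biUnion_insert, Set.union_comm (cell n m q j), ← Set.union_assoc,
    Set.ncard_insert_of_notMem hqT hTfin]
  rw [ncard_cell hn] at hunion
  linarith

lemma ncard_cellsFrom_sub (hd : 0 < d) (hn : 2 ≤ n) (m : ℕ) {k : ℕ} (hk : k < n) :
    (cellsFrom d n m (n - k)).ncard + k * 2 ^ d = (1 + k * 2 ^ d) * (vicsekV d n m).ncard := by
  induction k with
  | zero => simp [cellsFrom_self, ncard_cell hn]
  | succ k ih =>
    have hstep := ncard_cellsFrom_add hd hn m (j := n - (k + 1)) (by omega)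
    rw [show n - (k + 1) + 1 = n - k by omega] at hstep
    have := ih (by omega)
    linarith

lemma ncard_vicsekV_succ (hd : 0 < d) (hn : 2 ≤ n) (m : ℕ) :
    (vicsekV d n (m + 1)).ncard + (n - 1) * 2 ^ d =
      (1 + (n - 1) * 2 ^ d) * (vicsekV d n m).ncard := by
  have h := ncard_cellsFrom_sub hd hn m (k := n - 1) (by omega)
  rwa [Nat.sub_sub_self (by omega)] at h

end Vicsek

theorem stmt_13 (d n m : ℕ) (hd : 2 ≤ d) (hn : 2 ≤ n) :
    (vicsekV d n m).ncard = (2 ^ d * n - 2 ^ d + 1) ^ m * (2 ^ d - 1) + 1 := by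
  have hK : 2 ^ d * n - 2 ^ d + 1 = 1 + (n - 1) * 2 ^ d := by
    rw [Nat.sub_one_mul, Nat.mul_comm n, Nat.add_comm]
  rw [hK]
  induction m with
  | zero => simp [vicsekV, Vicsek.ncard_vicsekCorners, Nat.sub_add_cancel Nat.one_le_two_pow]
  | succ m ih =>
    have h := Vicsek.ncard_vicsekV_succ (d := d) (by omega) hn m
    rw [ih] at h
    rw [pow_succ]
    linarith
end
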